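/- arXiv:1709.04652 — 6 statements merged into one kernel-verified Lean document; each statement's English description precedes it below -/
import Mathlib

section
/- Let S be a finite set and (v_i | i ∈ I) a family of integer-valued vectors in ℤ^S. Suppose that, viewed in ℚ^S, the family spans ℚ^S over ℚ, and that for every prime p the family, with entries reduced mod p, spans 𝔽_p^S over 𝔽_p. Then the family spans ℤ^S over ℤ, i.e., every integer-valued vector is an integer linear combination of the v_i. -/
/-- If a family of integer vectors in `ℤ^S` (`S` finite) spans `ℚ^S` over `ℚ` and,
reduced mod `p`, spans `𝔽_p^S` over `𝔽_p` for every prime `p`, then it spans `ℤ^S`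
over `ℤ`. -/
theorem int_span_of_rat_and_modp_span {S : Type*} [Fintype S] {I : Type*}
    (v : I → S → ℤ)
    (hQ : Submodule.span ℚ (Set.range fun i => fun s => ((v i s : ℚ))) = ⊤)
    (hp : ∀ p : ℕ, p.Prime →
      Submodule.span (ZMod p) (Set.range fun i => fun s => ((v i s : ZMod p))) = ⊤) :
    Submodule.span ℤ (Set.range v) = ⊤ := by
  classical
  set M := Submodule.span ℤ (Set.range v) with hM
  -- Step B : mod every prime p, every x is congruent to an element of M
  have stepB : ∀ p : ℕ, p.Prime → ∀ x : S → ℤ, ∃ y : S → ℤ, x - (p : ℤ) • y ∈ M := by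
    intro p hP x
    haveI : NeZero p := ⟨hP.ne_zero⟩
    have hx : (fun s => ((x s : ZMod p))) ∈
        Submodule.span (ZMod p) (Set.range fun i => fun s => ((v i s : ZMod p))) := by
      rw [hp p hP]; trivial
    rw [Finsupp.mem_span_range_iff_exists_finsupp] at hx
    obtain ⟨c, hc⟩ := hx
    choose lift hlift using (ZMod.intCast_surjective (n := p))
    set w : S → ℤ := c.sum fun i a => (lift a) • v i with hw
    have hwM : w ∈ M := by
      apply Submodule.sum_mem
      intro i _
      exact Submodule.smul_mem _ _ (Submodule.subset_span ⟨i, rfl⟩)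
    have hdvd : ∀ s, (p : ℤ) ∣ x s - w s := by
      intro s
      have hws : ((w s : ℤ) : ZMod p) = (x s : ZMod p) := by
        have hcs := congrFun hc s
        rw [Finsupp.sum, Finset.sum_apply] at hcs
        simp only [Pi.smul_apply, smul_eq_mul] at hcs
        have hw2 : w s = ∑ i ∈ c.support, lift (c i) * v i s := by
          rw [hw, Finsupp.sum, Finset.sum_apply]
          simp
        rw [hw2, ← hcs]
        push_cast
        apply Finset.sum_congr rfl
        intro i _
        rw [hlift]
      have : ((x s - w s : ℤ) : ZMod p) = 0 := by
        push_cast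
        rw [hws]; ring
      exact (ZMod.intCast_zmod_eq_zero_iff_dvd _ p).mp this
    refine ⟨fun s => (x s - w s) / p, ?_⟩
    have : x - (p : ℤ) • (fun s => (x s - w s) / p) = w := by
      funext s
      simp only [Pi.sub_apply, Pi.smul_apply, smul_eq_mul]
      rw [Int.mul_ediv_cancel' (hdvd s)]
      ring
    rw [this]; exact hwM
  -- Step A : a uniform positive integer n with n • x ∈ M for all x
  have key : ∀ x : S → ℤ, ∃ n : ℕ, 0 < n ∧ (n : ℤ) • x ∈ M := by
    let T : Submodule ℚ (S → ℚ) :=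
      { carrier := {q | ∃ n : ℕ, 0 < n ∧ ∃ m ∈ M, ∀ s, (m s : ℚ) = n * q s}
        add_mem' := by
          rintro a b ⟨n, hn, m, hm, hms⟩ ⟨n', hn', m', hm', hms'⟩
          refine ⟨n * n', by positivity, (n' : ℤ) • m + (n : ℤ) • m',
            Submodule.add_mem _ (Submodule.smul_mem _ _ hm) (Submodule.smul_mem _ _ hm'),
            fun s => ?_⟩
          simp only [Pi.add_apply, Pi.smul_apply, smul_eq_mul]
          push_cast
          rw [hms s, hms' s]
          ring
        zero_mem' := ⟨1, one_pos, 0, Submodule.zero_mem _, by simp⟩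
        smul_mem' := by
          rintro c q ⟨n, hn, m, hm, hms⟩
          refine ⟨n * c.den, by positivity, c.num • m, Submodule.smul_mem _ _ hm, fun s => ?_⟩
          have hden : (c.den : ℚ) * c = c.num := by rw [mul_comm, Rat.mul_den_eq_num]
          simp only [Pi.smul_apply, smul_eq_mul]
          push_cast
          rw [hms s]
          calc (c.num : ℚ) * (n * q s) = n * ((c.den : ℚ) * c) * q s := by rw [hden]; ring
            _ = (n * c.den : ℚ) * (c * q s) := by ring
      }
    have hsub : Submodule.span ℚ (Set.range fun i => fun s => ((v i s : ℚ))) ≤ T := by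
      rw [Submodule.span_le]
      rintro _ ⟨i, rfl⟩
      exact ⟨1, one_pos, v i, Submodule.subset_span ⟨i, rfl⟩, by simp⟩
    intro x
    have hxT : (fun s => (x s : ℚ)) ∈ T := by
      apply hsub
      rw [hQ]; trivial
    obtain ⟨n, hn, m, hm, hms⟩ := hxT
    refine ⟨n, hn, ?_⟩
    have : (n : ℤ) • x = m := by
      funext s
      have h := hms s
      push_cast at h
      simp only [Pi.smul_apply, smul_eq_mul]
      exact_mod_cast h.symm
    rw [this]; exact hm
  choose nn hnn hnnM using key
  let e : S → S → ℤ := fun s => Pi.single s 1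
  set N : ℕ := ∏ s : S, nn (e s) with hN
  have hN0 : 0 < N := Finset.prod_pos fun s _ => hnn _
  have stepA : ∀ x : S → ℤ, (N : ℤ) • x ∈ M := by
    intro x
    have hxe : x = ∑ s : S, x s • e s := by
      funext t
      simp [e, Finset.sum_apply, Pi.single_apply, Finset.sum_ite_eq', mul_comm]
    rw [hxe, Finset.smul_sum]
    apply Submodule.sum_mem
    intro s _
    have hdv : (nn (e s) : ℤ) ∣ (N : ℤ) :=
      Int.natCast_dvd_natCast.mpr (Finset.dvd_prod_of_mem _ (Finset.mem_univ s))
    obtain ⟨k, hk⟩ := hdv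
    have h2 : (N : ℤ) • (x s • e s) = (x s * k) • ((nn (e s) : ℤ) • e s) := by
      rw [smul_smul, smul_smul, hk]; ring_nf
    rw [h2]
    exact Submodule.smul_mem _ _ (hnnM _)
  -- Step C : for every n > 0, every x is congruent mod n to an element of M
  have stepC : ∀ n : ℕ, 0 < n → ∀ x : S → ℤ, ∃ y, x - (n : ℤ) • y ∈ M := by
    intro n
    induction n using Nat.strong_induction_on with
    | _ n ih =>
      intro hn x
      rcases eq_or_ne n 1 with h1 | h1
      · refine ⟨x, ?_⟩
        rw [h1]
        push_cast
        rw [one_smul, sub_self]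
        exact Submodule.zero_mem M
      · have hpf := Nat.minFac_prime h1
        obtain ⟨k, hk⟩ := Nat.minFac_dvd n
        have hk0 : 0 < k := by
          rcases Nat.eq_zero_or_pos k with h | h
          · rw [h, mul_zero] at hk; omega
          · exact h
        have hklt : k < n := by
          have h2 := hpf.two_le
          calc k < 2 * k := by omega
            _ ≤ n.minFac * k := by exact Nat.mul_le_mul_right k h2
            _ = n := hk.symm
        obtain ⟨y₁, hy₁⟩ := stepB n.minFac hpf x
        obtain ⟨y₂, hy₂⟩ := ih k hklt hk0 y₁
        refine ⟨y₂, ?_⟩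
        have heq : x - (n : ℤ) • y₂ =
            (x - (n.minFac : ℤ) • y₁) + (n.minFac : ℤ) • (y₁ - (k : ℤ) • y₂) := by
          have hkz : (n : ℤ) = (n.minFac : ℤ) * k := by exact_mod_cast hk
          rw [hkz]
          funext s
          simp only [Pi.sub_apply, Pi.add_apply, Pi.smul_apply, smul_eq_mul]
          ring
        rw [heq]
        exact Submodule.add_mem _ hy₁ (Submodule.smul_mem _ _ hy₂)
  rw [eq_top_iff]
  intro x _
  obtain ⟨y, hy⟩ := stepC N hN0 x
  have hfin := Submodule.add_mem M hy (stepA y)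
  simpa using hfin
end

section
/- Let S be a finite set and (v_i | i ∈ I) a family of vectors in ℤ^S spanning ℚ^S over ℚ. For s ∈ S let δ_s be the least positive integer γ such that γ·e_s lies in the ℤ-span of the family (where e_s is the standard basis vector at s). If additionally the family spans 𝔽_p^S over 𝔽_p for every prime p, then δ_s = 1 for every s ∈ S. -/
section Aux

variable {S : Type*} [Fintype S] [DecidableEq S] {I : Type*}

/-- The reduction map `ℤ^S → (ZMod p)^S` as a `ℤ`-linear map. -/
private def redMap (S : Type*) (p : ℕ) : (S → ℤ) →ₗ[ℤ] (S → ZMod p) where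
  toFun x := fun s => (x s : ZMod p)
  map_add' x y := by
    funext s
    show ((x s + y s : ℤ) : ZMod p) = (x s : ZMod p) + (y s : ZMod p)
    push_cast; ring
  map_smul' c x := by
    funext s
    show ((c * x s : ℤ) : ZMod p) = c • ((x s : ℤ) : ZMod p)
    push_cast
    rw [zsmul_eq_mul]

private lemma modp_step (v : I → S → ℤ) {p : ℕ} (hpp : p.Prime)
    (hp : Submodule.span (ZMod p) (Set.range fun i => fun s => ((v i s : ZMod p))) = ⊤)
    (x : S → ℤ) :
    ∃ m ∈ Submodule.span ℤ (Set.range v), ∃ w : S → ℤ, x = m + (p : ℤ) • w := by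
  haveI : Fact p.Prime := ⟨hpp⟩
  set f := redMap S p with hf
  -- the ℤ-span of the reductions is everything
  have hspanZ : Submodule.span ℤ (Set.range fun i => fun s => ((v i s : ZMod p))) = ⊤ := by
    rw [eq_top_iff]
    intro y _
    have hy : y ∈ Submodule.span (ZMod p)
        (Set.range fun i => fun s => ((v i s : ZMod p))) := by rw [hp]; trivial
    refine Submodule.span_induction (fun z hz => Submodule.subset_span hz)
      (Submodule.zero_mem _) (fun a b _ _ ha hb => Submodule.add_mem _ ha hb)
      (fun c a _ ha => ?_) hy
    have h2 : c • a = (c.val : ℤ) • a := by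
      rw [← Int.cast_smul_eq_zsmul (ZMod p), Int.cast_natCast, ZMod.natCast_val, ZMod.cast_id]
    rw [h2]
    exact Submodule.smul_mem _ _ ha
  -- the image of the span under `f` is everything
  have hmap : Submodule.map f (Submodule.span ℤ (Set.range v)) = ⊤ := by
    rw [Submodule.map_span, ← Set.range_comp]
    have : (⇑f ∘ v) = fun i => fun s => ((v i s : ZMod p)) := rfl
    rw [this, hspanZ]
  have hx : f x ∈ Submodule.map f (Submodule.span ℤ (Set.range v)) := by rw [hmap]; trivial
  obtain ⟨m, hm, hfm⟩ := hx
  refine ⟨m, hm, fun s => (x s - m s) / p, ?_⟩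
  funext s
  have hdvd : (p : ℤ) ∣ (x s - m s) := by
    have : ((x s - m s : ℤ) : ZMod p) = 0 := by
      have := congrFun hfm s
      simp only [hf, redMap, LinearMap.coe_mk, AddHom.coe_mk] at this
      push_cast
      rw [this]
      ring
    exact (ZMod.intCast_zmod_eq_zero_iff_dvd _ _).mp this
  simp only [Pi.add_apply, Pi.smul_apply, smul_eq_mul]
  linarith [Int.mul_ediv_cancel' hdvd]

private lemma decomp (v : I → S → ℤ)
    (hp : ∀ p : ℕ, p.Prime →
      Submodule.span (ZMod p) (Set.range fun i => fun s => ((v i s : ZMod p))) = ⊤) :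
    ∀ n : ℕ, 0 < n → ∀ x : S → ℤ,
      ∃ m ∈ Submodule.span ℤ (Set.range v), ∃ w : S → ℤ, x = m + (n : ℤ) • w := by
  intro n
  induction n using Nat.strong_induction_on with
  | _ n ih =>
    intro hn x
    rcases eq_or_ne n 1 with rfl | hne
    · exact ⟨0, Submodule.zero_mem _, x, by simp⟩
    · set p := n.minFac with hpdef
      have hpp : p.Prime := Nat.minFac_prime hne
      have hdvd : p ∣ n := Nat.minFac_dvd n
      obtain ⟨k, hk⟩ := hdvd
      have hkpos : 0 < k := by
        rcases Nat.eq_zero_or_pos k with rfl | h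
        · simp at hk; omega
        · exact h
      obtain ⟨m1, hm1, w1, hw1⟩ := modp_step v hpp (hp p hpp) x
      have hklt : k < n := by
        have hp1 : 1 < p := hpp.one_lt
        calc k = 1 * k := (one_mul k).symm
        _ < p * k := by exact (Nat.mul_lt_mul_right hkpos).mpr hp1
        _ = n := hk.symm
      obtain ⟨m2, hm2, w2, hw2⟩ := ih k hklt hkpos w1
      refine ⟨m1 + (p : ℤ) • m2, ?_, w2, ?_⟩
      · exact Submodule.add_mem _ hm1 (Submodule.smul_mem _ _ hm2)
      · rw [hw1, hw2, hk]
        push_cast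
        funext s
        simp [mul_smul]
        ring

end Aux

/-- Let `(v i)` be integer vectors in `ℤ^S` spanning `ℚ^S` over `ℚ`. For `s ∈ S` let
`δ s` be the least positive integer `γ` with `γ • e_s` in the `ℤ`-span of the family.
If moreover the family spans `𝔽_p^S` over `𝔽_p` for every prime `p`, then `δ s = 1`
for every `s`. -/
theorem delta_eq_one_of_modp_span {S : Type*} [Fintype S] [DecidableEq S] {I : Type*}
    (v : I → S → ℤ) (δ : S → ℕ)
    (hQ : Submodule.span ℚ (Set.range fun i => fun s => ((v i s : ℚ))) = ⊤)
    (hδ : ∀ s : S, IsLeast {γ : ℕ | 0 < γ ∧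
      (γ : ℤ) • (Pi.single s (1 : ℤ)) ∈ Submodule.span ℤ (Set.range v)} (δ s))
    (hp : ∀ p : ℕ, p.Prime →
      Submodule.span (ZMod p) (Set.range fun i => fun s => ((v i s : ZMod p))) = ⊤) :
    ∀ s : S, δ s = 1 := by
  intro s
  set M := Submodule.span ℤ (Set.range v) with hM
  set D : ℕ := ∏ t : S, δ t with hD
  have hDpos : 0 < D := Finset.prod_pos (fun t _ => (hδ t).1.1)
  -- D • x ∈ M for every x
  have hDsmul : ∀ x : S → ℤ, (D : ℤ) • x ∈ M := by
    intro x
    have hx : x = ∑ t : S, x t • Pi.single t (1 : ℤ) := by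
      funext u
      simp [Pi.single_apply]
    rw [hx, Finset.smul_sum]
    refine Submodule.sum_mem _ (fun t _ => ?_)
    obtain ⟨c, hc⟩ : (δ t : ℤ) ∣ (D : ℤ) := Int.natCast_dvd_natCast.mpr
      (Finset.dvd_prod_of_mem δ (Finset.mem_univ t))
    have : (D : ℤ) • x t • (Pi.single t (1 : ℤ) : S → ℤ)
        = (x t * c) • ((δ t : ℤ) • (Pi.single t (1 : ℤ) : S → ℤ)) := by
      rw [smul_smul, smul_smul, hc]; congr 1; ring
    rw [this]
    exact Submodule.smul_mem _ _ (hδ t).1.2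
  -- M = ⊤
  have hMtop : M = ⊤ := by
    rw [eq_top_iff]
    intro x _
    obtain ⟨m, hm, w, hw⟩ := decomp v hp D hDpos x
    rw [hw]
    exact Submodule.add_mem _ hm (hDsmul w)
  have h1 : (1 : ℕ) ∈ {γ : ℕ | 0 < γ ∧
      (γ : ℤ) • (Pi.single s (1 : ℤ)) ∈ Submodule.span ℤ (Set.range v)} := by
    refine ⟨one_pos, ?_⟩
    rw [← hM, hMtop]
    trivial
  have hle := (hδ s).2 h1
  have hpos := (hδ s).1.1
  omega
end

section
/- Let σ be a cyclic ordering of a finite set E and let (P_i | i ∈ [n]) with n ≥ 1 be a partition of E such that no two elements of the same class P_i separate some other class P_j. Then some class P_k is a (contiguous) interval of σ. -/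
-- A cyclic ordering of a finite set `E` of size `n` is an identification
-- `σ : ZMod n ≃ E` of `E` with `ZMod n` with its natural cyclic structure.

/-- The open arc of the cyclic ordering `σ` strictly between `a` and `b`,
going forwards from `a` to `b`. -/
def cycArc {n : ℕ} {E : Type*} (σ : ZMod n ≃ E) (a b : E) : Set E :=
  {x | ∃ k : ℕ, 0 < k ∧ k < (σ.symm b - σ.symm a).val ∧ x = σ (σ.symm a + (k : ZMod n))}

/-- Two elements `y₁, y₂` separate the set `X` in the cyclic ordering `σ` if neither
belongs to `X` and both open arcs between them contain an element of `X`. -/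
def CycSeparates {n : ℕ} {E : Type*} (σ : ZMod n ≃ E) (X : Set E) (y₁ y₂ : E) : Prop :=
  y₁ ∉ X ∧ y₂ ∉ X ∧ (X ∩ cycArc σ y₁ y₂).Nonempty ∧ (X ∩ cycArc σ y₂ y₁).Nonempty

/-- A set is an interval of the cyclic ordering `σ` if its elements occur
consecutively. -/
def IsCycInterval {n : ℕ} {E : Type*} (σ : ZMod n ≃ E) (X : Set E) : Prop :=
  ∃ (a : ZMod n) (m : ℕ), X = {x | ∃ k : ℕ, k < m ∧ x = σ (a + (k : ZMod n))}

/-- If `(P i | i ∈ Fin N)` is a partition of a cyclically ordered finite set such that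
no two elements of the same class separate some other class, then some class is an
interval of the cyclic ordering. -/
theorem exists_interval_class_of_no_separation {n : ℕ} (hn : 0 < n) {E : Type*}
    (σ : ZMod n ≃ E) {N : ℕ} (hN : 1 ≤ N) (P : Fin N → Set E)
    (hne : ∀ i, (P i).Nonempty)
    (hdisj : ∀ i j, i ≠ j → Disjoint (P i) (P j))
    (hcover : ∀ x : E, ∃ i, x ∈ P i)
    (hsep : ∀ i j, i ≠ j → ∀ y₁ ∈ P i, ∀ y₂ ∈ P i, ¬ CycSeparates σ (P j) y₁ y₂) :
    ∃ k, IsCycInterval σ (P k) := by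
  classical
  haveI : NeZero n := ⟨hn.ne'⟩
  set S : ZMod n → ℕ → Set E := fun a m => {x | ∃ k : ℕ, k < m ∧ x = σ (a + (k : ZMod n))}
    with hSdef
  -- every x lies in S a n for any a
  have hrep : ∀ (a : ZMod n) (x : E), x = σ (a + (((σ.symm x - a).val : ℕ) : ZMod n)) := by
    intro a x
    have : (((σ.symm x - a).val : ℕ) : ZMod n) = σ.symm x - a := by
      simp [ZMod.natCast_val, ZMod.cast_id]
    rw [this, add_sub_cancel]
    exact (σ.apply_symm_apply x).symm
  have hQ : ∀ i, ∃ m, ∃ a : ZMod n, P i ⊆ S a m := by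
    intro i
    exact ⟨n, 0, fun x _ => ⟨(σ.symm x - 0).val, ZMod.val_lt _, hrep 0 x⟩⟩
  let f : Fin N → ℕ := fun i => Nat.find (hQ i)
  have hNne : (Finset.univ : Finset (Fin N)).Nonempty := ⟨⟨0, hN⟩, Finset.mem_univ _⟩
  obtain ⟨k, -, hkmin⟩ := Finset.exists_min_image Finset.univ f hNne
  refine ⟨k, ?_⟩
  set m := f k with hmdef
  obtain ⟨a, hPkS⟩ : ∃ a : ZMod n, P k ⊆ S a m := Nat.find_spec (hQ k)
  have hmn : m ≤ n := Nat.find_le ⟨0, fun x _ => ⟨(σ.symm x - 0).val, ZMod.val_lt _, hrep 0 x⟩⟩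
  have hm1 : 1 ≤ m := by
    by_contra h
    obtain ⟨x, hx⟩ := hne k
    obtain ⟨t, ht, -⟩ := hPkS hx
    omega
  -- the left endpoint is in P k
  have hy₁ : σ a ∈ P k := by
    by_contra h
    have : P k ⊆ S (a + 1) (m - 1) := by
      intro x hx
      obtain ⟨t, ht, hxt⟩ := hPkS hx
      have ht0 : t ≠ 0 := by
        rintro rfl
        simp only [Nat.cast_zero, add_zero] at hxt
        exact h (hxt ▸ hx)
      refine ⟨t - 1, by omega, ?_⟩
      rw [hxt]
      congr 1
      have : (t : ZMod n) = 1 + ((t - 1 : ℕ) : ZMod n) := by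
        rw [← Nat.cast_one, ← Nat.cast_add]
        congr 1
        omega
      rw [this]
      ring
    have hle : m ≤ m - 1 := Nat.find_le (h := hQ k) (n := m - 1) ⟨a + 1, this⟩
    omega
  -- the right endpoint is in P k
  have hy₂ : σ (a + ((m - 1 : ℕ) : ZMod n)) ∈ P k := by
    by_contra h
    have : P k ⊆ S a (m - 1) := by
      intro x hx
      obtain ⟨t, ht, hxt⟩ := hPkS hx
      have htm : t ≠ m - 1 := by
        rintro rfl
        exact h (hxt ▸ hx)
      exact ⟨t, by omega, hxt⟩
    have hle : m ≤ m - 1 := Nat.find_le (h := hQ k) (n := m - 1) ⟨a, this⟩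
    omega
  -- key: S a m ⊆ P k
  have hsub : S a m ⊆ P k := by
    intro x hx
    by_contra hxk
    obtain ⟨t, htm, hxt⟩ := hx
    obtain ⟨j, hxj⟩ := hcover x
    have hjk : j ≠ k := by rintro rfl; exact hxk hxj
    have ht0 : t ≠ 0 := by
      rintro rfl
      simp only [Nat.cast_zero, add_zero] at hxt
      exact hxk (hxt ▸ hy₁)
    have htm1 : t ≠ m - 1 := by
      rintro rfl
      exact hxk (hxt ▸ hy₂)
    -- so 0 < t < m - 1, in particular m ≥ 3
    set y₁ := σ a with hy₁def
    set y₂ := σ (a + ((m - 1 : ℕ) : ZMod n)) with hy₂def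
    have hsy₁ : σ.symm y₁ = a := σ.symm_apply_apply a
    have hsy₂ : σ.symm y₂ = a + ((m - 1 : ℕ) : ZMod n) := σ.symm_apply_apply _
    have hval12 : (σ.symm y₂ - σ.symm y₁).val = m - 1 := by
      rw [hsy₁, hsy₂, add_sub_cancel_left, ZMod.val_cast_of_lt (by omega)]
    have hval21 : (σ.symm y₁ - σ.symm y₂).val = n - (m - 1) := by
      rw [hsy₁, hsy₂]
      have : a - (a + ((m - 1 : ℕ) : ZMod n)) = -((m - 1 : ℕ) : ZMod n) := by ring
      rw [this, ZMod.neg_val]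
      have hne0 : ((m - 1 : ℕ) : ZMod n) ≠ 0 := by
        intro h0
        have h1 := ZMod.val_cast_of_lt (n := n) (a := m - 1) (by omega)
        rw [h0, ZMod.val_zero] at h1
        omega
      rw [if_neg hne0, ZMod.val_cast_of_lt (by omega)]
    -- x is in the forward arc from y₁ to y₂
    have hxarc : x ∈ cycArc σ y₁ y₂ := by
      refine ⟨t, by omega, by omega, ?_⟩
      rw [hsy₁]; exact hxt
    -- P j meets no element of the backward arc from y₂ to y₁
    have harc21 : ∀ z ∈ P j, z ∉ cycArc σ y₂ y₁ := by
      intro z hz hzarc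
      exact hsep k j hjk.symm y₁ hy₁ y₂ hy₂
        ⟨fun h => ((hdisj k j hjk.symm).le_bot ⟨hy₁, h⟩).elim,
         fun h => ((hdisj k j hjk.symm).le_bot ⟨hy₂, h⟩).elim,
         ⟨x, hxj, hxarc⟩, ⟨z, hz, hzarc⟩⟩
    -- hence P j fits in a shorter interval
    have hPjS : P j ⊆ S (a + 1) (m - 2) := by
      intro z hz
      set s := (σ.symm z - a).val with hsdef
      have hsn : s < n := ZMod.val_lt _
      have hzs : z = σ (a + (s : ZMod n)) := hrep a z
      have hs0 : s ≠ 0 := by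
        rintro h0
        rw [h0] at hzs
        simp only [Nat.cast_zero, add_zero] at hzs
        exact (hdisj k j hjk.symm).le_bot ⟨hzs ▸ hy₁, hz⟩
      have hsm1 : s ≠ m - 1 := by
        rintro h0
        rw [h0] at hzs
        exact (hdisj k j hjk.symm).le_bot ⟨hzs ▸ hy₂, hz⟩
      have hsm : s < m := by
        by_contra hsm
        push_neg at hsm
        refine harc21 z hz ⟨s - (m - 1), by omega, by omega, ?_⟩
        rw [hsy₂, hzs]
        congr 1
        rw [add_assoc]
        congr 1
        rw [← Nat.cast_add]
        congr 1
        omega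
      refine ⟨s - 1, by omega, ?_⟩
      rw [hzs]
      congr 1
      have : (s : ZMod n) = 1 + ((s - 1 : ℕ) : ZMod n) := by
        rw [← Nat.cast_one, ← Nat.cast_add]
        congr 1
        omega
      rw [this]
      ring
    have hfj : f j ≤ m - 2 := Nat.find_le (h := hQ j) (n := m - 2) ⟨a + 1, hPjS⟩
    have hmm : m ≤ m - 2 := le_trans (hkmin j (Finset.mem_univ j)) hfj
    omega
  exact ⟨a, m, le_antisymm hPkS hsub⟩
end

section
/- Let σ be a cyclic ordering of a finite set, 𝒫 a partition of its elements, and let σ' be obtained from σ by a 𝒫-improving exchange. Then the fluctuation of σ' with respect to 𝒫 is strictly smaller than the fluctuation of σ with respect to 𝒫. -/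
-- A cyclic ordering of a finite set `E` of size `n` is an identification
-- `σ : ZMod n ≃ E`.  A partition `𝒫` is encoded by its class map `c : E → ι`.

/-- Cyclic successor (`+1`) with respect to the cyclic ordering `σ`. -/
def cycSucc {n : ℕ} {E : Type*} (σ : ZMod n ≃ E) (x : E) : E := σ (σ.symm x + 1)

/-- Cyclic predecessor (`−1`) with respect to the cyclic ordering `σ`. -/
def cycPred {n : ℕ} {E : Type*} (σ : ZMod n ≃ E) (x : E) : E := σ (σ.symm x - 1)

/-- `x₁, x₂, x₃, x₄` appear in this cyclic order (all distinct) in `σ`. -/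
def InCyclicOrder {n : ℕ} {E : Type*} (σ : ZMod n ≃ E) (x₁ x₂ x₃ x₄ : E) : Prop :=
  0 < (σ.symm x₂ - σ.symm x₁).val ∧
    (σ.symm x₂ - σ.symm x₁).val < (σ.symm x₃ - σ.symm x₁).val ∧
    (σ.symm x₃ - σ.symm x₁).val < (σ.symm x₄ - σ.symm x₁).val

/-- `σ'` is the exchange of `σ` with respect to `x₁,x₂,x₃,x₄`: the successor relation
is unchanged except that the successor of `x₄` becomes `x₂`, the successor of the
predecessor of `x₃` becomes `x₁+1`, the successor of the predecessor of `x₂` becomes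
`x₄+1`, and the successor of `x₁` becomes `x₃`. -/
def IsExchange {n : ℕ} {E : Type*} (σ σ' : ZMod n ≃ E) (x₁ x₂ x₃ x₄ : E) : Prop :=
  cycSucc σ' x₄ = x₂ ∧
  cycSucc σ' (cycPred σ x₃) = cycSucc σ x₁ ∧
  cycSucc σ' (cycPred σ x₂) = cycSucc σ x₄ ∧
  cycSucc σ' x₁ = x₃ ∧
  ∀ y : E, y ≠ x₄ → y ≠ cycPred σ x₃ → y ≠ cycPred σ x₂ → y ≠ x₁ →
    cycSucc σ' y = cycSucc σ y

/-- The exchange data `x₁,x₂,x₃,x₄` is `𝒫`-improving for the partition with class map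
`c`: `x₂` and `x₄` are in the same class, but none of the pairs `(x₄,x₄+1)`,
`(x₂,x₂−1)`, `(x₁,x₁+1)`, `(x₃,x₃−1)` lies in a common class. -/
def IsImprovingData {n : ℕ} {E : Type*} {ι : Type*} (σ : ZMod n ≃ E) (c : E → ι)
    (x₁ x₂ x₃ x₄ : E) : Prop :=
  c x₂ = c x₄ ∧ c x₄ ≠ c (cycSucc σ x₄) ∧ c x₂ ≠ c (cycPred σ x₂) ∧
    c x₁ ≠ c (cycSucc σ x₁) ∧ c x₃ ≠ c (cycPred σ x₃)

/-- The fluctuation of the cyclic ordering `σ` with respect to the partition with class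
map `c`: the number of cyclically adjacent pairs lying in different classes. -/
noncomputable def fluctuation {n : ℕ} {E : Type*} {ι : Type*} (σ : ZMod n ≃ E)
    (c : E → ι) : ℕ :=
  {k : ZMod n | c (σ k) ≠ c (σ (k + 1))}.ncard

/-- A cyclic ordering obtained from `σ` by a `𝒫`-improving exchange has strictly
smaller fluctuation with respect to `𝒫`. -/
theorem fluctuation_lt_of_improving_exchange {n : ℕ} (hn : 0 < n) {E : Type*}
    {ι : Type*} (σ σ' : ZMod n ≃ E) (c : E → ι) (x₁ x₂ x₃ x₄ : E)
    (hord : InCyclicOrder σ x₁ x₂ x₃ x₄)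
    (himp : IsImprovingData σ c x₁ x₂ x₃ x₄)
    (hex : IsExchange σ σ' x₁ x₂ x₃ x₄) :
    fluctuation σ' c < fluctuation σ c := by
  classical
  haveI : NeZero n := ⟨hn.ne'⟩
  haveI : Fintype E := Fintype.ofEquiv _ σ
  obtain ⟨h1, h2, h3, h4, h5⟩ := hex
  obtain ⟨i1, i2, i3, i4, i5⟩ := himp
  have succ_pred : ∀ (τ : ZMod n ≃ E) (x : E), cycSucc τ (cycPred τ x) = x := by
    intro τ x
    simp [cycSucc, cycPred]
  have hfl : ∀ τ : ZMod n ≃ E,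
      fluctuation τ c = {y : E | c y ≠ c (cycSucc τ y)}.ncard := by
    intro τ
    have himg : {k : ZMod n | c (τ k) ≠ c (τ (k + 1))}
        = τ.symm '' {y : E | c y ≠ c (cycSucc τ y)} := by
      ext k
      constructor
      · intro h
        exact ⟨τ k, by simpa [cycSucc] using h, by simp⟩
      · rintro ⟨y, hy, rfl⟩
        simpa [cycSucc] using hy
    rw [fluctuation, himg, Set.ncard_image_of_injective _ τ.symm.injective]
  rw [hfl σ, hfl σ']
  set S : Set E := {y : E | c y ≠ c (cycSucc σ y)} with hS
  set S' : Set E := {y : E | c y ≠ c (cycSucc σ' y)} with hS'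
  have hx4S : x₄ ∈ S := i2
  have hsub : S' ⊆ S \ {x₄} := by
    intro y hy
    rcases eq_or_ne y x₄ with rfl | hy4
    · exact absurd (by rw [h1]; exact i1.symm) hy
    refine ⟨?_, hy4⟩
    rcases eq_or_ne y (cycPred σ x₃) with rfl | hy3
    · show c _ ≠ c (cycSucc σ _)
      rw [succ_pred]
      exact fun h => i5 h.symm
    rcases eq_or_ne y (cycPred σ x₂) with rfl | hy2
    · show c _ ≠ c (cycSucc σ _)
      rw [succ_pred]
      exact fun h => i3 h.symm
    rcases eq_or_ne y x₁ with rfl | hy1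
    · exact i4
    · have heq := h5 y hy4 hy3 hy2 hy1
      show c y ≠ c (cycSucc σ y)
      rw [← heq]
      exact hy
  calc S'.ncard ≤ (S \ {x₄}).ncard := Set.ncard_le_ncard hsub (Set.toFinite _)
    _ < S.ncard := Set.ncard_diff_singleton_lt_of_mem hx4S (Set.toFinite _)
end

section
/- There is no graph whose cycle matroid is M_n (the disjoint union of a circuit C_n of length n ≥ 3 and a single loop ℓ) and that meets all the connectivity constraints X[i,n] = C_n − e_i − e_{i+1} + ℓ for i ∈ ℤ_n, where meeting a constraint X means that X is a connected edge set of the graph. -/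
/-- A multigraph: each edge has an unordered pair of endvertices (possibly equal,
i.e. loops are allowed). -/
structure MGraph (V E : Type*) where
  ends : E → Sym2 V

/-- An edge set `X` of a graph is connected if the subgraph consisting of `X` and its
incident vertices is connected: any two edges of `X` are linked by a chain of edges of
`X` in which consecutive edges share a vertex. -/
def EdgeConnected {V E : Type*} (G : MGraph V E) (X : Set E) : Prop :=
  ∀ a ∈ X, ∀ b ∈ X, Relation.ReflTransGen
    (fun x y => x ∈ X ∧ y ∈ X ∧ ∃ v : V, v ∈ G.ends x ∧ v ∈ G.ends y) a b

/-- The degree of the vertex `v` in the edge set `X`: loops count twice. -/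
noncomputable def degIn {V E : Type*} (G : MGraph V E) (X : Set E) (v : V) : ℕ :=
  {e ∈ X | v ∈ G.ends e ∧ ¬ (G.ends e).IsDiag}.ncard +
    2 * {e ∈ X | G.ends e = Sym2.diag v}.ncard

/-- A circuit of the cycle matroid of a graph: the edge set of a cycle, i.e. a
nonempty finite connected edge set in which every vertex has degree `0` or `2`. -/
def GraphCircuit {V E : Type*} (G : MGraph V E) (X : Set E) : Prop :=
  X.Nonempty ∧ X.Finite ∧ EdgeConnected G X ∧ ∀ v : V, degIn G X v = 0 ∨ degIn G X v = 2

/-- The set of circuits of the cycle matroid of the graph `G`. -/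
def graphCircuits {V E : Type*} (G : MGraph V E) : Set (Set E) :=
  {X | GraphCircuit G X}

/-- The ground set of the matroid `M_n`: the elements `e_i` (`i ∈ ℤ_n`) of the
`n`-circuit together with the loop `ℓ`. -/
abbrev MnElem (n : ℕ) := ZMod n ⊕ Unit

/-- The circuits of `M_n`, the direct sum of a circuit on `e_1, …, e_n` and a loop
`ℓ`: the set of all `e_i`, and the singleton of the loop. -/
def MnCircuits (n : ℕ) : Set (Set (MnElem n)) :=
  {Set.range Sum.inl, {Sum.inr ()}}

/-- The connectivity constraint `X[i,n]`: all cycle elements except `e_i` and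
`e_{i+1}`, together with the loop `ℓ`. -/
def MnConstraint (n : ℕ) (i : ZMod n) : Set (MnElem n) :=
  (Set.range Sum.inl \ {Sum.inl i, Sum.inl (i + 1)}) ∪ {Sum.inr ()}

/-!
In a graph realising `M_n` the loop `ℓ` sits at a vertex `u` and the `e_i` form a cycle. Deleting
two edges from a cycle leaves a connected set only when the two edges are adjacent, so the
connectivity of `X[i,n] - ℓ` makes `e_i` and `e_{i+1}` meet at a vertex `v_i`, which lies on no
other `e_j`. The connectivity of `X[i,n]` also makes `ℓ` meet `X[i,n] - ℓ`, so `u` lies on some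
`e_j` and differs from every `v_i`. But the ends of `e_j` are `v_{j-1} ≠ v_j`, leaving no room
for `u`.
-/

lemma Sym2.finite_setOf_mem {α : Type*} (z : Sym2 α) : {x | x ∈ z}.Finite := by
  classical
  exact z.toFinset.finite_toSet.subset fun _ hx => Sym2.mem_toFinset.2 hx

namespace MGraph

variable {V E : Type*} (G : MGraph V E)

def vertexSet (X : Set E) : Set V := {v | ∃ e ∈ X, v ∈ G.ends e}

def ShareVertex (x y : E) : Prop := ∃ v, v ∈ G.ends x ∧ v ∈ G.ends y

variable {G} {X T : Set E} {a b l y : E} {u v : V}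

lemma vertexSet_mono {Y : Set E} (h : X ⊆ Y) : G.vertexSet X ⊆ G.vertexSet Y :=
  fun _ ⟨e, he, hv⟩ => ⟨e, h he, hv⟩

lemma finite_vertexSet (hX : X.Finite) : (G.vertexSet X).Finite :=
  (hX.biUnion fun e _ => (G.ends e).finite_setOf_mem).subset
    fun _ ⟨_, he, hv⟩ => Set.mem_biUnion he hv

lemma ncard_vertexSet_singleton_le (e : E) : (G.vertexSet {e}).ncard ≤ 2 := by
  induction h : G.ends e using Sym2.ind with
  | _ x y =>
    calc (G.vertexSet {e}).ncard ≤ ({x, y} : Set V).ncard :=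
          Set.ncard_le_ncard (by rintro w ⟨_, rfl, hw⟩; simpa [h] using hw)
      _ ≤ ({y} : Set V).ncard + 1 := Set.ncard_insert_le _ _
      _ = 2 := by rw [Set.ncard_singleton]

lemma ncard_vertexSet_insert_le (hT : T.Finite) (hv : v ∈ G.vertexSet T) (hvy : v ∈ G.ends y) :
    (G.vertexSet (insert y T)).ncard ≤ (G.vertexSet T).ncard + 1 := by
  obtain ⟨w, hw⟩ := Sym2.mem_iff_exists.1 hvy
  calc (G.vertexSet (insert y T)).ncard ≤ (insert w (G.vertexSet T)).ncard := by
        refine Set.ncard_le_ncard ?_ ((finite_vertexSet hT).insert w)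
        rintro x ⟨e, rfl | he, hx⟩
        · rw [hw, Sym2.mem_iff] at hx
          rcases hx with rfl | rfl
          exacts [Or.inr hv, Or.inl rfl]
        · exact Or.inr ⟨e, he, hx⟩
    _ ≤ (G.vertexSet T).ncard + 1 := Set.ncard_insert_le _ _

lemma ShareVertex.symm {x : E} (h : G.ShareVertex x y) : G.ShareVertex y x :=
  let ⟨v, hx, hy⟩ := h; ⟨v, hy, hx⟩

lemma mem_ends_of_shareVertex_loop (hl : G.ends l = Sym2.diag u) (h : G.ShareVertex l y) :
    u ∈ G.ends y := by
  obtain ⟨v, hvl, hvy⟩ := h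
  rw [hl, Sym2.diag, Sym2.mem_iff, or_self] at hvl
  exact hvl ▸ hvy

end MGraph

open MGraph

section

variable {V E : Type*} {G : MGraph V E} {C X T : Set E} {a b e l x y : E} {u v : V}

lemma EdgeConnected.exists_shareVertex_of_mem_of_notMem (hX : EdgeConnected G X) (ha : a ∈ X)
    (haT : a ∈ T) (hb : b ∈ X) (hbT : b ∉ T) :
    ∃ x ∈ T, ∃ y ∈ X, y ∉ T ∧ G.ShareVertex x y := by
  have hab := hX a ha b hb
  clear hb
  induction hab with
  | refl => exact absurd haT hbT
  | @tail c d _ hcd ih =>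
    by_cases hc : c ∈ T
    · exact ⟨c, hc, d, hcd.2.1, hbT, hcd.2.2⟩
    · exact ih hc

lemma edgeConnected_of_exists_shareVertex
    (h : ∀ T ⊆ X, ∀ a ∈ T, ∀ b ∈ X, b ∉ T →
      ∃ x ∈ T, ∃ y ∈ X, y ∉ T ∧ G.ShareVertex x y) :
    EdgeConnected G X := by
  intro a ha b hb
  by_contra hab
  obtain ⟨x, ⟨hxX, hax⟩, y, hyX, hy, hxy⟩ :=
    h {c ∈ X | Relation.ReflTransGen _ a c} (Set.sep_subset _ _) a ⟨ha, .refl⟩ b hb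
      fun hb' => hab hb'.2
  exact hy ⟨hyX, hax.tail ⟨hxX, hyX, hxy⟩⟩

lemma EdgeConnected.diff_loop (hl : G.ends l = Sym2.diag u) (hX : EdgeConnected G X) :
    EdgeConnected G (X \ {l}) := by
  refine edgeConnected_of_exists_shareVertex fun T hT a ha b hb hbT => ?_
  have hTX : T ⊆ X := hT.trans Set.sdiff_subset
  obtain ⟨x, hx, y, hyX, hyT, hxy⟩ :=
    hX.exists_shareVertex_of_mem_of_notMem (hTX ha) ha hb.1 hbT
  by_cases hyl : y = l
  · -- The exit from `T` is the loop, so `x` passes through `u`; any exit from `insert l T`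
    -- either avoids the loop or also passes through `u`.
    rw [hyl] at hxy
    obtain ⟨x', hx', y', hy'X, hy', hxy'⟩ :=
      hX.exists_shareVertex_of_mem_of_notMem (T := insert l T) (hTX ha) (Or.inr ha) hb.1
        (by rintro (h | h); exacts [hb.2 h, hbT h])
    have hy'X' : y' ∈ X \ {l} := ⟨hy'X, fun h => hy' (Or.inl h)⟩
    rcases hx' with rfl | hx'T
    · exact ⟨x, hx, y', hy'X', fun h => hy' (Or.inr h), u,
        mem_ends_of_shareVertex_loop hl hxy.symm,
        mem_ends_of_shareVertex_loop hl hxy'⟩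
    · exact ⟨x', hx'T, y', hy'X', fun h => hy' (Or.inr h), hxy'⟩
  · exact ⟨x, hx, y, ⟨hyX, hyl⟩, hyT, hxy⟩

lemma EdgeConnected.exists_mem_ends_of_loop (hl : G.ends l = Sym2.diag u)
    (hX : EdgeConnected G X) (hlX : l ∈ X) (hb : b ∈ X) (hbl : b ≠ l) :
    ∃ e ∈ X, e ≠ l ∧ u ∈ G.ends e := by
  obtain ⟨x, rfl, y, hyX, hyl, hxy⟩ :=
    hX.exists_shareVertex_of_mem_of_notMem (T := {l}) hlX rfl hb hbl
  exact ⟨y, hyX, hyl, mem_ends_of_shareVertex_loop hl hxy⟩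

lemma EdgeConnected.ncard_vertexSet_le_add_ncard_diff (hX : EdgeConnected G X) (hfin : X.Finite)
    (hTX : T ⊆ X) (hT : T.Nonempty) :
    (G.vertexSet X).ncard ≤ (G.vertexSet T).ncard + (X \ T).ncard := by
  induction hk : (X \ T).ncard generalizing T with
  | zero =>
    have hXT : X ⊆ T := Set.sdiff_eq_empty.1 ((Set.ncard_eq_zero hfin.sdiff).1 hk)
    simpa using Set.ncard_le_ncard (vertexSet_mono (G := G) hXT)
      (finite_vertexSet (hfin.subset hTX))
  | succ k ih =>
    obtain ⟨b, hbX, hbT⟩ := Set.nonempty_of_ncard_ne_zero (by omega : (X \ T).ncard ≠ 0)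
    obtain ⟨a, ha⟩ := hT
    obtain ⟨x, hx, y, hyX, hyT, v, hvx, hvy⟩ :=
      hX.exists_shareVertex_of_mem_of_notMem (hTX ha) ha hbX hbT
    have hk' : (X \ insert y T).ncard = k := by
      rw [show X \ insert y T = (X \ T) \ {y} by ext; simp; tauto,
        Set.ncard_sdiff_singleton_of_mem (show y ∈ X \ T from ⟨hyX, hyT⟩), hk,
        Nat.add_sub_cancel]
    have := ih (Set.insert_subset hyX hTX) ⟨y, Or.inl rfl⟩ hk'
    have := ncard_vertexSet_insert_le (hfin.subset hTX) ⟨x, hx, hvx⟩ hvy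
    omega

lemma EdgeConnected.ncard_vertexSet_le (hX : EdgeConnected G X) (hfin : X.Finite) :
    (G.vertexSet X).ncard ≤ X.ncard + 1 := by
  rcases X.eq_empty_or_nonempty with rfl | ⟨a, ha⟩
  · simp [vertexSet]
  have := hX.ncard_vertexSet_le_add_ncard_diff hfin (Set.singleton_subset_iff.2 ha) ⟨a, rfl⟩
  have := Set.ncard_sdiff_singleton_add_one ha hfin
  have := ncard_vertexSet_singleton_le (G := G) a
  omega


lemma degIn_eq_ncard (hX : ∀ e ∈ X, ¬ (G.ends e).IsDiag) (v : V) :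
    degIn G X v = {e ∈ X | v ∈ G.ends e}.ncard := by
  have hloops : {e ∈ X | G.ends e = Sym2.diag v} = ∅ :=
    Set.eq_empty_of_forall_notMem fun e ⟨he, hev⟩ => hX e he (hev ▸ Sym2.diag_isDiag v)
  have hedges : {e ∈ X | v ∈ G.ends e ∧ ¬ (G.ends e).IsDiag} = {e ∈ X | v ∈ G.ends e} :=
    Set.sep_ext_iff.2 fun e he => and_iff_left (hX e he)
  simp [degIn, hloops, hedges]

lemma graphCircuit_singleton_iff : GraphCircuit G {e} ↔ (G.ends e).IsDiag := by
  constructor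
  · rintro ⟨-, -, -, hdeg⟩
    by_contra hloop
    have hv := (G.ends e).out_fst_mem
    have h := hdeg (G.ends e).out.1
    rw [degIn_eq_ncard (by simpa using hloop), show {e' ∈ ({e} : Set E) | _} = {e} by
      ext; simp +contextual [hv]] at h
    simp at h
  · intro hloop
    obtain ⟨w, hw⟩ : ∃ w, G.ends e = Sym2.diag w := ⟨_, (Sym2.diag_diagElem hloop).symm⟩
    refine ⟨Set.singleton_nonempty e, Set.finite_singleton e,
      fun _ ha _ hb => ha.symm ▸ hb.symm ▸ .refl, fun v => ?_⟩
    have hedges : {e' ∈ ({e} : Set E) | v ∈ G.ends e' ∧ ¬ (G.ends e').IsDiag} = ∅ :=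
      Set.eq_empty_of_forall_notMem fun _ ⟨he', _, hnd⟩ =>
        hnd (Set.mem_singleton_iff.1 he' ▸ hloop)
    by_cases hvw : v = w
    · have hloops : {e' ∈ ({e} : Set E) | G.ends e' = Sym2.diag v} = {e} :=
        Set.ext fun _ =>
          ⟨And.left, fun he' => ⟨he', Set.mem_singleton_iff.1 he' ▸ hvw ▸ hw⟩⟩
      right
      rw [degIn, hedges, hloops, Set.ncard_empty, Set.ncard_singleton]
    · have hloops : {e' ∈ ({e} : Set E) | G.ends e' = Sym2.diag v} = ∅ :=
        Set.eq_empty_of_forall_notMem fun _ ⟨he', hev⟩ => hvw <| by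
          rw [Set.mem_singleton_iff.1 he', hw] at hev
          exact (Sym2.diag_injective hev).symm
      left
      rw [degIn, hedges, hloops, Set.ncard_empty]

lemma GraphCircuit.ncard_incident_eq_two (hC : GraphCircuit G C)
    (hloop : ∀ e ∈ C, ¬ (G.ends e).IsDiag) (hv : v ∈ G.vertexSet C) :
    {e ∈ C | v ∈ G.ends e}.ncard = 2 := by
  obtain ⟨e, he, hve⟩ := hv
  rw [← degIn_eq_ncard hloop]
  refine (hC.2.2.2 v).resolve_left fun h0 => ?_
  rw [degIn_eq_ncard hloop, Set.ncard_eq_zero (hC.2.1.subset (Set.sep_subset _ _))] at h0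
  exact Set.eq_empty_iff_forall_notMem.1 h0 e ⟨he, hve⟩

lemma GraphCircuit.ncard_vertexSet (hC : GraphCircuit G C)
    (hloop : ∀ e ∈ C, ¬ (G.ends e).IsDiag) : (G.vertexSet C).ncard = C.ncard := by
  classical
  have hCfin := hC.2.1
  have hWfin := finite_vertexSet (G := G) hCfin
  have key := Finset.card_mul_eq_card_mul (fun e v => v ∈ G.ends e)
    (s := hCfin.toFinset) (t := hWfin.toFinset) (m := 2) (n := 2) ?_ ?_
  · rw [Set.ncard_eq_toFinset_card _ hCfin, Set.ncard_eq_toFinset_card _ hWfin]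
    omega
  · intro e he
    rw [Set.Finite.mem_toFinset] at he
    obtain ⟨y, h⟩ := Sym2.mem_iff_exists.1 (G.ends e).out_fst_mem
    set x := (G.ends e).out.1
    have hxy : x ≠ y := fun hxy => hloop e he (h ▸ Sym2.mk_isDiag_iff.2 hxy)
    rw [show hWfin.toFinset.bipartiteAbove _ e = {x, y} by
      ext w
      simp only [Finset.mem_bipartiteAbove, Set.Finite.mem_toFinset, Finset.mem_insert,
        Finset.mem_singleton, h, Sym2.mem_iff]
      exact ⟨And.right, fun hw => ⟨⟨e, he, h ▸ Sym2.mem_iff.2 hw⟩, hw⟩⟩]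
    exact Finset.card_pair hxy
  · intro v hv
    rw [← hC.ncard_incident_eq_two hloop (hWfin.mem_toFinset.1 hv), ← Set.ncard_coe_finset]
    congr 1
    ext e
    simp [Finset.bipartiteBelow]

lemma GraphCircuit.eq_or_eq_of_mem_ends (hC : GraphCircuit G C)
    (hloop : ∀ e ∈ C, ¬ (G.ends e).IsDiag) (ha : a ∈ C) (hb : b ∈ C) (hx : x ∈ C)
    (hab : a ≠ b) (hva : v ∈ G.ends a) (hvb : v ∈ G.ends b) (hvx : v ∈ G.ends x) :
    x = a ∨ x = b := by
  by_contra! h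
  have hsub : ({a, b, x} : Set E) ⊆ {e ∈ C | v ∈ G.ends e} := by
    rintro e (rfl | rfl | rfl)
    exacts [⟨ha, hva⟩, ⟨hb, hvb⟩, ⟨hx, hvx⟩]
  have := Set.ncard_le_ncard hsub (hC.2.1.subset (Set.sep_subset _ _))
  rw [hC.ncard_incident_eq_two hloop ⟨a, ha, hva⟩,
    Set.ncard_eq_three.2 ⟨a, b, x, hab, Ne.symm h.1, Ne.symm h.2, rfl⟩] at this
  omega

/-- In a cycle, deleting two edges that do not meet leaves a path system that still covers all
`|C|` vertices with only `|C| - 2` edges, which is too few for it to be connected. -/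
lemma GraphCircuit.shareVertex_of_edgeConnected_diff_pair (hC : GraphCircuit G C)
    (hloop : ∀ e ∈ C, ¬ (G.ends e).IsDiag) (ha : a ∈ C) (hb : b ∈ C)
    (hconn : EdgeConnected G (C \ {a, b})) : G.ShareVertex a b := by
  by_contra hab
  have hne : a ≠ b := by
    rintro rfl
    exact hab ⟨_, (G.ends a).out_fst_mem, (G.ends a).out_fst_mem⟩
  have hcover : G.vertexSet C ⊆ G.vertexSet (C \ {a, b}) := by
    rintro v ⟨e, he, hve⟩
    by_contra hv
    have hsub : {e ∈ C | v ∈ G.ends e} ⊆ {a, b} :=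
      fun e ⟨he, hve⟩ => by_contra fun h => hv ⟨e, ⟨he, h⟩, hve⟩
    have heq := Set.eq_of_subset_of_ncard_le hsub
      (by rw [hC.ncard_incident_eq_two hloop ⟨e, he, hve⟩, Set.ncard_pair hne]) (Set.toFinite _)
    have hva : a ∈ {e ∈ C | v ∈ G.ends e} := heq ▸ Or.inl rfl
    have hvb : b ∈ {e ∈ C | v ∈ G.ends e} := heq ▸ Or.inr rfl
    exact hab ⟨v, hva.2, hvb.2⟩
  have hpair : {a, b} ⊆ C := Set.insert_subset ha (Set.singleton_subset_iff.2 hb)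
  have h1 := Set.ncard_le_ncard hcover (finite_vertexSet hC.2.1.sdiff)
  have h2 := hconn.ncard_vertexSet_le hC.2.1.sdiff
  have h3 := Set.ncard_sdiff_add_ncard_of_subset hpair hC.2.1
  rw [hC.ncard_vertexSet hloop] at h1
  rw [Set.ncard_pair hne] at h3
  omega

end

lemma mnConstraint_diff_inr (n : ℕ) (i : ZMod n) :
    MnConstraint n i \ {Sum.inr ()} = Set.range Sum.inl \ {Sum.inl i, Sum.inl (i + 1)} := by
  ext (j | _) <;> simp [MnConstraint]

section

variable {n : ℕ}

lemma ZMod.add_one_ne_self (hn : n ≠ 1) (i : ZMod n) : i + 1 ≠ i := by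
  rwa [Ne, add_eq_left, ZMod.one_eq_zero_iff]

lemma ZMod.add_two_ne_self (hn : 3 ≤ n) (i : ZMod n) : i + 2 ≠ i := by
  rw [Ne, add_eq_left, ← Nat.cast_ofNat, ZMod.natCast_eq_zero_iff]
  exact fun h => by have := Nat.le_of_dvd two_pos h; omega

lemma ZMod.add_two_ne_add_one (hn : n ≠ 1) (i : ZMod n) : i + 2 ≠ i + 1 := by
  rw [show i + 2 = i + 1 + 1 by ring]
  exact ZMod.add_one_ne_self hn _

variable {V : Type*} {G : MGraph V (MnElem n)} {u : V}

lemma exists_ends_inr_eq_diag (hG : graphCircuits G = MnCircuits n) :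
    ∃ u, G.ends (Sum.inr ()) = Sym2.diag u := by
  have h : GraphCircuit G {Sum.inr ()} := show _ ∈ graphCircuits G from hG ▸ Or.inr rfl
  exact ⟨_, (Sym2.diag_diagElem (graphCircuit_singleton_iff.1 h)).symm⟩

lemma graphCircuit_range_inl (hG : graphCircuits G = MnCircuits n) :
    GraphCircuit G (Set.range Sum.inl) :=
  show _ ∈ graphCircuits G from hG ▸ Or.inl rfl

lemma not_isDiag_ends_of_mem_range_inl (hn : n ≠ 1) (hG : graphCircuits G = MnCircuits n) :
    ∀ e ∈ Set.range Sum.inl, ¬ (G.ends e).IsDiag := by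
  rintro _ ⟨j, rfl⟩ h
  have : ({Sum.inl j} : Set (MnElem n)) ∈ MnCircuits n := hG ▸ graphCircuit_singleton_iff.2 h
  rcases this with h | h
  · have : (Sum.inl (j + 1) : MnElem n) ∈ ({Sum.inl j} : Set _) := h ▸ ⟨j + 1, rfl⟩
    exact ZMod.add_one_ne_self hn j (by simpa using this)
  · have : (Sum.inl j : MnElem n) ∈ ({Sum.inr ()} : Set _) := h ▸ rfl
    simp at this

lemma shareVertex_inl_inl_add_one (hn : n ≠ 1) (hG : graphCircuits G = MnCircuits n)
    (hX : ∀ i, EdgeConnected G (MnConstraint n i)) (i : ZMod n) :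
    G.ShareVertex (Sum.inl i) (Sum.inl (i + 1)) := by
  obtain ⟨u, hu⟩ := exists_ends_inr_eq_diag hG
  refine (graphCircuit_range_inl hG).shareVertex_of_edgeConnected_diff_pair
    (not_isDiag_ends_of_mem_range_inl hn hG) ⟨i, rfl⟩ ⟨i + 1, rfl⟩ ?_
  rw [← mnConstraint_diff_inr]
  exact (hX i).diff_loop hu

lemma exists_mem_ends_inl_of_loop (hn : 3 ≤ n) (hX : ∀ i, EdgeConnected G (MnConstraint n i))
    (hu : G.ends (Sum.inr ()) = Sym2.diag u) (i : ZMod n) :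
    ∃ j, j ≠ i ∧ j ≠ i + 1 ∧ u ∈ G.ends (Sum.inl j) := by
  have hmem : (Sum.inl (i + 2) : MnElem n) ∈ MnConstraint n i := by
    refine Or.inl ⟨⟨i + 2, rfl⟩, ?_⟩
    simp [ZMod.add_two_ne_self hn, ZMod.add_two_ne_add_one (n := n) (by omega)]
  obtain ⟨e, he, hel, hue⟩ := (hX i).exists_mem_ends_of_loop hu (Or.inr rfl) hmem (by simp)
  have : e ∈ Set.range Sum.inl \ {Sum.inl i, Sum.inl (i + 1)} :=
    mnConstraint_diff_inr n i ▸ ⟨he, hel⟩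
  obtain ⟨⟨j, rfl⟩, hj⟩ := this
  exact ⟨j, fun h => hj (Or.inl (h ▸ rfl)), fun h => hj (Or.inr (h ▸ rfl)), hue⟩

end

/-- There is no graph whose cycle matroid is `M_n` (the disjoint union of an
`n`-circuit and a loop, `n ≥ 3`) meeting all the connectivity constraints
`X[i,n] = C_n − e_i − e_{i+1} + ℓ`. -/
theorem no_graph_meets_all_constraints (n : ℕ) (hn : 3 ≤ n) :
    ¬ ∃ (V : Type) (G : MGraph V (MnElem n)),
        graphCircuits G = MnCircuits n ∧
          ∀ i : ZMod n, EdgeConnected G (MnConstraint n i) := by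
  rintro ⟨V, G, hG, hX⟩
  have hn1 : n ≠ 1 := by omega
  have hC := graphCircuit_range_inl hG
  have hloop := not_isDiag_ends_of_mem_range_inl hn1 hG
  obtain ⟨u, hu⟩ := exists_ends_inr_eq_diag hG
  choose v hv using shareVertex_inl_inl_add_one hn1 hG hX
  have honly : ∀ i j, v i ∈ G.ends (Sum.inl j) → j = i ∨ j = i + 1 := fun i j h => by
    simpa using hC.eq_or_eq_of_mem_ends hloop ⟨i, rfl⟩ ⟨i + 1, rfl⟩ ⟨j, rfl⟩
      (by simpa using (ZMod.add_one_ne_self hn1 i).symm) (hv i).1 (hv i).2 h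
  have hu_ne : ∀ i, u ≠ v i := by
    rintro i rfl
    obtain ⟨j, hji, hji1, hj⟩ := exists_mem_ends_inl_of_loop hn hX hu i
    exact (honly i j hj).elim hji hji1
  have hv_ne : ∀ i, v i ≠ v (i + 1) := fun i h => by
    have := honly i (i + 2) (by rw [h, show i + 2 = i + 1 + 1 by ring]; exact (hv (i + 1)).2)
    exact this.elim (ZMod.add_two_ne_self hn i) (ZMod.add_two_ne_add_one hn1 i)
  obtain ⟨j, -, -, hj⟩ := exists_mem_ends_inl_of_loop hn hX hu 0
  have hends : G.ends (Sum.inl j) = s(v (j - 1), v j) := by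
    refine (Sym2.mem_and_mem_iff (by simpa using hv_ne (j - 1))).1 ⟨?_, (hv j).1⟩
    simpa using (hv (j - 1)).2
  rw [hends, Sym2.mem_iff] at hj
  exact hj.elim (hu_ne _) (hu_ne _)
end

section
/- For each i ∈ ℤ_n there is a graph whose cycle matroid is M_n (an n-circuit plus a loop) which meets all connectivity constraints X[j,n] for j ≠ i: namely, the n-cycle with the loop attached at the vertex incident with e_i and e_{i+1}. -/
/-! The graph is the `n`-cycle on `ℤ_n` with `e_k = {k, k + 1}` and the loop `ℓ` at `i + 1`,
the common end of `e_i` and `e_{i+1}`. Every vertex has degree `2` in the cycle edges, so both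
the cycle and the loop are circuits, and there are no others: a circuit through the loop already
has degree `2` at `i + 1`, so it avoids `e_i` and `e_{i+1}` and, being connected, is the loop
alone; a circuit avoiding the loop is closed under `e_k ↦ e_{k+1}` by the degree condition at
`k + 1`, hence is the whole cycle. For `j ≠ i`, the constraint `X[j,n]` is the path
`e_{j+2}, …, e_{j-1}` together with the loop, and the loop touches `e_i` or `e_{i+1}`, at least
one of which lies on that path because `n ≥ 3`. -/

namespace MGraph

variable {V E : Type*}

def EdgeStep (G : MGraph V E) (X : Set E) (x y : E) : Prop :=
  x ∈ X ∧ y ∈ X ∧ ∃ v : V, v ∈ G.ends x ∧ v ∈ G.ends y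

instance (G : MGraph V E) (X : Set E) : Std.Symm (G.EdgeStep X) :=
  ⟨fun _ _ ⟨hx, hy, v, hvx, hvy⟩ => ⟨hy, hx, v, hvy, hvx⟩⟩

end MGraph

section EdgeConnected

variable {V E : Type*} {G : MGraph V E} {X : Set E} {a : E}

theorem edgeConnected_of_reflTransGen
    (h : ∀ b ∈ X, Relation.ReflTransGen (G.EdgeStep X) a b) : EdgeConnected G X :=
  fun b hb c hc => (Std.Symm.symm _ _ (h b hb)).trans (h c hc)

theorem EdgeConnected.eq_singleton (hX : EdgeConnected G X) (ha : a ∈ X)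
    (h : ∀ b, G.EdgeStep X a b → b = a) : X = {a} := by
  refine Set.eq_singleton_iff_unique_mem.2 ⟨ha, fun b hb => ?_⟩
  have hab := hX a ha b hb
  clear hb
  induction hab with
  | refl => rfl
  | tail _ hstep ih => exact h _ (ih ▸ hstep)

end EdgeConnected

@[elab_as_elim]
theorem ZMod.add_one_induction {n : ℕ} [NeZero n] {P : ZMod n → Prop} {a : ZMod n} (ha : P a)
    (h : ∀ k, P k → P (k + 1)) (k : ZMod n) : P k := by
  have hP : ∀ m : ℕ, P (a + m) := fun m => by
    induction m with
    | zero => simpa using ha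
    | succ m ih => simpa [add_assoc] using h _ ih
  simpa using hP (k - a).val

theorem Set.ncard_inter_pair {α : Type*} {X : Set α} [DecidablePred (· ∈ X)] {a b : α}
    (hab : a ≠ b) :
    (X ∩ {a, b}).ncard = (if a ∈ X then 1 else 0) + if b ∈ X then 1 else 0 := by
  by_cases ha : a ∈ X <;> by_cases hb : b ∈ X <;>
    simp [ha, hb, Set.inter_comm X, Set.insert_inter_of_mem, Set.insert_inter_of_notMem, hab]

def cycleWithLoop (n : ℕ) (i : ZMod n) : MGraph (ZMod n) (MnElem n) :=
  ⟨Sum.elim (fun k => s(k, k + 1)) fun _ => Sym2.diag (i + 1)⟩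

section cycleWithLoop

variable {n : ℕ} {i : ZMod n}

@[simp]
theorem mem_ends_cycleWithLoop_inl {k v : ZMod n} :
    v ∈ (cycleWithLoop n i).ends (.inl k) ↔ v = k ∨ v = k + 1 :=
  Sym2.mem_iff

@[simp]
theorem mem_ends_cycleWithLoop_inr {v : ZMod n} (u : Unit) :
    v ∈ (cycleWithLoop n i).ends (.inr u) ↔ v = i + 1 :=
  Sym2.mem_iff.trans or_self_iff

open Classical in
theorem degIn_cycleWithLoop [Fact (1 < n)] (X : Set (MnElem n)) (v : ZMod n) :
    degIn (cycleWithLoop n i) X v =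
      (if .inl (v - 1) ∈ X then 1 else 0) + (if .inl v ∈ X then 1 else 0) +
        if v = i + 1 ∧ .inr () ∈ X then 2 else 0 := by
  have hne (k : ZMod n) : k ≠ k + 1 := by simp
  have hedges :
      {e ∈ X | v ∈ (cycleWithLoop n i).ends e ∧ ¬((cycleWithLoop n i).ends e).IsDiag} =
        X ∩ {.inl (v - 1), .inl v} := by
    ext (k | u)
    · simp [cycleWithLoop, Sym2.mk_isDiag_iff, hne, eq_sub_iff_add_eq, eq_comm]
      tauto
    · simp [cycleWithLoop]
  have hloops : {e ∈ X | (cycleWithLoop n i).ends e = Sym2.diag v} =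
      if v = i + 1 ∧ .inr () ∈ X then {.inr ()} else ∅ := by
    ext (k | u)
    · have : s(k, k + 1) ≠ Sym2.diag v := fun h =>
        hne k (Sym2.mk_isDiag_iff.1 (h ▸ Sym2.diag_isDiag v))
      split_ifs <;> simp [cycleWithLoop, this]
    · cases u
      split_ifs with h <;> simp [cycleWithLoop, Sym2.diag_injective.eq_iff, eq_comm, h]
      exact fun hu hv => h ⟨hv, hu⟩
  rw [degIn, hedges, hloops, Set.ncard_inter_pair (by simp)]
  split_ifs <;> simp

theorem edgeStep_cycleWithLoop_inl_add_one {X : Set (MnElem n)} {k : ZMod n}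
    (hk : .inl k ∈ X) (hk1 : .inl (k + 1) ∈ X) :
    (cycleWithLoop n i).EdgeStep X (.inl k) (.inl (k + 1)) :=
  ⟨hk, hk1, k + 1, by simp, by simp⟩

theorem edgeStep_cycleWithLoop_inl_inr {X : Set (MnElem n)} {k : ZMod n}
    (hk : .inl k ∈ X) (hl : .inr () ∈ X) (hki : k = i ∨ k = i + 1) :
    (cycleWithLoop n i).EdgeStep X (.inl k) (.inr ()) :=
  ⟨hk, hl, i + 1, by rcases hki with rfl | rfl <;> simp, by simp⟩

theorem edgeConnected_cycleWithLoop_mnConstraint (hn : 3 ≤ n) {j : ZMod n} (hji : j ≠ i) :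
    EdgeConnected (cycleWithLoop n i) (MnConstraint n j) := by
  have : Fact (1 < n) := ⟨by omega⟩
  have hmem (k : ZMod n) : .inl k ∈ MnConstraint n j ↔ k ≠ j ∧ k ≠ j + 1 := by
    simp [MnConstraint]
  have hl : .inr () ∈ MnConstraint n j := by simp [MnConstraint]
  have harc : ∀ k, .inl k ∈ MnConstraint n j → Relation.ReflTransGen
      ((cycleWithLoop n i).EdgeStep (MnConstraint n j)) (.inl (j + 2)) (.inl k) := by
    intro k
    -- walk forward from `e_{j+2}`; at `k = j` the claim is vacuous
    refine ZMod.add_one_induction (a := j) (by simp [hmem]) (fun k hk hk1 => ?_) k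
    by_cases hkj : k = j + 1
    · rw [hkj, add_assoc, one_add_one_eq_two]
    · have hkX : .inl k ∈ MnConstraint n j :=
        (hmem k).2 ⟨fun h => ((hmem _).1 hk1).2 (h ▸ rfl), hkj⟩
      exact (hk hkX).tail (edgeStep_cycleWithLoop_inl_add_one hkX hk1)
  refine edgeConnected_of_reflTransGen (a := .inl (j + 2)) fun b hb => ?_
  rcases b with k | u
  · exact harc k hb
  obtain ⟨k, hkX, hki⟩ : ∃ k, .inl k ∈ MnConstraint n j ∧ (k = i ∨ k = i + 1) := by
    by_cases h : i = j + 1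
    · have h2 : (2 : ZMod n) ≠ 0 := by
        intro h2
        have := Nat.le_of_dvd two_pos ((ZMod.natCast_eq_zero_iff 2 n).1 (by exact_mod_cast h2))
        omega
      refine ⟨i + 1, (hmem _).2 ⟨fun h' => h2 ?_, fun h' => hji (add_right_cancel h').symm⟩,
        .inr rfl⟩
      linear_combination h' - h
    · exact ⟨i, (hmem _).2 ⟨Ne.symm hji, h⟩, .inl rfl⟩
  exact (harc k hkX).tail (edgeStep_cycleWithLoop_inl_inr hkX hl hki)

variable [Fact (1 < n)]

theorem graphCircuit_cycleWithLoop_range_inl :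
    GraphCircuit (cycleWithLoop n i) (Set.range Sum.inl) := by
  refine ⟨Set.range_nonempty _, Set.finite_range _, ?_, fun v => .inr ?_⟩
  · have hreach (k : ZMod n) : Relation.ReflTransGen
        ((cycleWithLoop n i).EdgeStep (Set.range Sum.inl)) (.inl 0) (.inl k) :=
      ZMod.add_one_induction .refl
        (fun k hk => hk.tail (edgeStep_cycleWithLoop_inl_add_one ⟨k, rfl⟩ ⟨k + 1, rfl⟩)) k
    exact edgeConnected_of_reflTransGen fun _ ⟨k, hk⟩ => hk ▸ hreach k
  · simp [degIn_cycleWithLoop]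

theorem graphCircuit_cycleWithLoop_loop : GraphCircuit (cycleWithLoop n i) {.inr ()} := by
  refine ⟨Set.singleton_nonempty _, Set.finite_singleton _, ?_, fun v => ?_⟩
  · rintro _ rfl _ rfl
    exact .refl
  · by_cases h : v = i + 1 <;> simp [degIn_cycleWithLoop, h]

theorem GraphCircuit.eq_singleton_inr_of_mem {X : Set (MnElem n)}
    (hX : GraphCircuit (cycleWithLoop n i) X) (hl : .inr () ∈ X) : X = {.inr ()} := by
  obtain ⟨-, -, hconn, hdeg⟩ := hX
  have hi : .inl i ∉ X ∧ .inl (i + 1) ∉ X := by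
    have := hdeg (i + 1)
    simp only [degIn_cycleWithLoop, add_sub_cancel_right, hl, and_self, if_true] at this
    split_ifs at this <;> simp_all
  refine hconn.eq_singleton hl fun b ⟨_, hb, v, hv, hvb⟩ => ?_
  rcases b with k | u
  · obtain rfl | rfl : k = i + 1 ∨ k = i := by
      simp only [mem_ends_cycleWithLoop_inr, mem_ends_cycleWithLoop_inl] at hv hvb
      rcases hvb with h | h
      · exact .inl (hv ▸ h).symm
      · exact .inr (add_right_cancel (hv ▸ h)).symm
    exacts [absurd hb hi.2, absurd hb hi.1]
  · rfl

theorem GraphCircuit.eq_range_inl_of_inr_notMem {X : Set (MnElem n)}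
    (hX : GraphCircuit (cycleWithLoop n i) X) (hl : .inr () ∉ X) : X = Set.range Sum.inl := by
  obtain ⟨⟨e, he⟩, -, -, hdeg⟩ := hX
  have hsucc (k : ZMod n) (hk : .inl k ∈ X) : .inl (k + 1) ∈ X := by
    have := hdeg (k + 1)
    simp only [degIn_cycleWithLoop, add_sub_cancel_right, hk, hl, and_false, if_true,
      if_false] at this
    split_ifs at this <;> simp_all
  rcases e with k₀ | u
  · refine (Set.range_subset_iff.2 (ZMod.add_one_induction he hsucc)).antisymm' ?_
    rintro (k | u) hx
    exacts [⟨k, rfl⟩, absurd hx hl]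
  · exact absurd he hl

theorem graphCircuits_cycleWithLoop : graphCircuits (cycleWithLoop n i) = MnCircuits n := by
  ext X
  refine ⟨fun hX => ?_, ?_⟩
  · by_cases hl : .inr () ∈ X
    · exact .inr (hX.eq_singleton_inr_of_mem hl)
    · exact .inl (hX.eq_range_inl_of_inr_notMem hl)
  · rintro (rfl | rfl)
    exacts [graphCircuit_cycleWithLoop_range_inl, graphCircuit_cycleWithLoop_loop]

end cycleWithLoop

/-- For each `i ∈ ℤ_n` there is a graph whose cycle matroid is `M_n` meeting all the
connectivity constraints `X[j,n]` for `j ≠ i` (namely the `n`-cycle with the loop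
attached at the vertex incident with `e_i` and `e_{i+1}`). -/
theorem graph_meets_all_but_one_constraint (n : ℕ) (hn : 3 ≤ n) (i : ZMod n) :
    ∃ (V : Type) (G : MGraph V (MnElem n)),
      graphCircuits G = MnCircuits n ∧
        ∀ j : ZMod n, j ≠ i → EdgeConnected G (MnConstraint n j) := by
  have : Fact (1 < n) := ⟨by omega⟩
  exact ⟨ZMod n, cycleWithLoop n i, graphCircuits_cycleWithLoop,
    fun _ hji => edgeConnected_cycleWithLoop_mnConstraint hn hji⟩
end
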